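/- arXiv:math/0508259 — 3 statements merged into one kernel-verified Lean document; each statement's English description precedes it below -/
import Mathlib

section
/- Let ℓ be a prime and k ≥ 1 an integer. The set Γ of matrices A ∈ GL₂(ℤ/ℓ^{2k}ℤ) whose reduction modulo ℓ^k is a scalar matrix (i.e., A ≡ cI (mod ℓ^k) for some c ∈ (ℤ/ℓ^kℤ)^*) is a subgroup of GL₂(ℤ/ℓ^{2k}ℤ), and this subgroup is commutative; in particular its action on (ℤ/ℓ^{2k}ℤ)² is abelian. -/
/-- Elements of `ZMod n` killed by reduction mod `m` are multiples of `m`. -/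
lemma aux_ker_mul (n m : ℕ) [NeZero n] (h : m ∣ n) (hmm : n ∣ m * m)
    (x y : ZMod n) (hx : ZMod.castHom h (ZMod m) x = 0)
    (hy : ZMod.castHom h (ZMod m) y = 0) : x * y = 0 := by
  have key : ∀ z : ZMod n, ZMod.castHom h (ZMod m) z = 0 → ∃ t, z = (m : ZMod n) * t := by
    intro z hz
    have hval : (z.val : ZMod m) = 0 := by rw [ZMod.natCast_val]; exact hz
    rw [ZMod.natCast_eq_zero_iff] at hval
    obtain ⟨t, ht⟩ := hval
    refine ⟨t, ?_⟩
    have hz2 : ((z.val : ℕ) : ZMod n) = z := ZMod.natCast_rightInverse z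
    rw [← hz2, ht]; push_cast; ring
  obtain ⟨t, ht⟩ := key x hx
  obtain ⟨s, hs⟩ := key y hy
  have hmm0 : ((m : ZMod n) * m) = 0 := by
    have : ((m * m : ℕ) : ZMod n) = 0 := (ZMod.natCast_eq_zero_iff _ _).2 hmm
    push_cast at this; exact this
  rw [ht, hs]
  calc (m : ZMod n) * t * ((m : ZMod n) * s) = ((m : ZMod n) * m) * (t * s) := by ring
    _ = 0 := by rw [hmm0, zero_mul]

/-- The set of matrices in `GL₂(ℤ/ℓ^{2k}ℤ)` whose reduction modulo `ℓ^k` is a scalar matrix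
is a commutative subgroup; in particular its action on `(ℤ/ℓ^{2k}ℤ)²` is abelian. -/
theorem stmt1 (ℓ k : ℕ) (hℓ : ℓ.Prime) (hk : 1 ≤ k) :
    ∃ Γ : Subgroup (GL (Fin 2) (ZMod (ℓ ^ (2 * k)))),
      ((Γ : Set (GL (Fin 2) (ZMod (ℓ ^ (2 * k))))) =
        {A : GL (Fin 2) (ZMod (ℓ ^ (2 * k))) | ∃ c : (ZMod (ℓ ^ k))ˣ,
          (A : Matrix (Fin 2) (Fin 2) (ZMod (ℓ ^ (2 * k)))).map
              (ZMod.castHom ((pow_dvd_pow ℓ (by omega) : ℓ ^ k ∣ ℓ ^ (2 * k))) (ZMod (ℓ ^ k))) =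
            (c : ZMod (ℓ ^ k)) • (1 : Matrix (Fin 2) (Fin 2) (ZMod (ℓ ^ k)))}) ∧
      (∀ A ∈ Γ, ∀ B ∈ Γ, A * B = B * A) ∧
      (∀ A ∈ Γ, ∀ B ∈ Γ, ∀ v : Fin 2 → ZMod (ℓ ^ (2 * k)),
        Matrix.mulVec (A : Matrix (Fin 2) (Fin 2) (ZMod (ℓ ^ (2 * k))))
            (Matrix.mulVec (B : Matrix (Fin 2) (Fin 2) (ZMod (ℓ ^ (2 * k)))) v) =
          Matrix.mulVec (B : Matrix (Fin 2) (Fin 2) (ZMod (ℓ ^ (2 * k))))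
            (Matrix.mulVec (A : Matrix (Fin 2) (Fin 2) (ZMod (ℓ ^ (2 * k)))) v)) := by
  haveI : NeZero (ℓ ^ (2 * k)) := ⟨pow_ne_zero _ hℓ.ne_zero⟩
  set n := ℓ ^ (2 * k) with hn
  have hdvd : ℓ ^ k ∣ n := pow_dvd_pow ℓ (by omega)
  have hmm : n ∣ ℓ ^ k * ℓ ^ k := by rw [hn, ← pow_add, two_mul]
  set f := ZMod.castHom hdvd (ZMod (ℓ ^ k)) with hf
  -- mapping matrices
  have map_mul' : ∀ M N : Matrix (Fin 2) (Fin 2) (ZMod n),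
      (M * N).map f = M.map f * N.map f := fun M N => Matrix.map_mul
  -- smul one maps nicely
  have map_smul_one : ∀ c : ZMod n, (c • (1 : Matrix (Fin 2) (Fin 2) (ZMod n))).map f
      = f c • (1 : Matrix (Fin 2) (Fin 2) (ZMod (ℓ ^ k))) := by
    intro c
    ext i j
    simp [Matrix.map_apply, Matrix.one_apply, Matrix.smul_apply, apply_ite f]
  -- the defining property
  set P : GL (Fin 2) (ZMod n) → Prop := fun A =>
    ∃ c : (ZMod (ℓ ^ k))ˣ, (A : Matrix (Fin 2) (Fin 2) (ZMod n)).map f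
      = (c : ZMod (ℓ ^ k)) • (1 : Matrix (Fin 2) (Fin 2) (ZMod (ℓ ^ k))) with hP
  have hone : P 1 := by
    refine ⟨1, ?_⟩
    simp [Matrix.map_one f (map_zero f) (map_one f)]
  have hmul : ∀ {A B}, P A → P B → P (A * B) := by
    rintro A B ⟨c, hc⟩ ⟨d, hd⟩
    refine ⟨c * d, ?_⟩
    have : ((A * B : GL (Fin 2) (ZMod n)) : Matrix (Fin 2) (Fin 2) (ZMod n))
        = (A : Matrix _ _ _) * (B : Matrix _ _ _) := rfl
    rw [this, map_mul', hc, hd, smul_mul_assoc, one_mul, smul_smul, Units.val_mul]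
  have hinv : ∀ {A}, P A → P A⁻¹ := by
    rintro A ⟨c, hc⟩
    refine ⟨c⁻¹, ?_⟩
    have h1 : (A : Matrix (Fin 2) (Fin 2) (ZMod n)) * ((A⁻¹ : GL (Fin 2) (ZMod n)) : Matrix _ _ _) = 1 :=
      A.mul_inv
    have h2 := congrArg (Matrix.map · f) h1
    simp only [map_mul', hc, Matrix.map_one f (map_zero f) (map_one f)] at h2
    rw [smul_mul_assoc, one_mul] at h2
    have h3 := congrArg (fun M => ((c⁻¹ : (ZMod (ℓ ^ k))ˣ) : ZMod (ℓ ^ k)) • M) h2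
    simp only [smul_smul] at h3
    rw [Units.inv_mul, one_smul] at h3
    exact h3
  set Γ : Subgroup (GL (Fin 2) (ZMod n)) :=
    { carrier := {A | P A}
      one_mem' := hone
      mul_mem' := fun ha hb => hmul ha hb
      inv_mem' := fun ha => hinv ha } with hΓ
  -- commutativity at matrix level
  haveI : NeZero (ℓ ^ k) := ⟨pow_ne_zero _ hℓ.ne_zero⟩
  have comm : ∀ A ∈ Γ, ∀ B ∈ Γ,
      (A : Matrix (Fin 2) (Fin 2) (ZMod n)) * (B : Matrix _ _ _)
      = (B : Matrix _ _ _) * (A : Matrix _ _ _) := by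
    rintro A ⟨c, hc⟩ B ⟨d, hd⟩
    set c' : ZMod n := ((c : ZMod (ℓ ^ k)).val : ZMod n) with hc'
    set d' : ZMod n := ((d : ZMod (ℓ ^ k)).val : ZMod n) with hd'
    have hfc' : f c' = (c : ZMod (ℓ ^ k)) := by
      rw [hc', map_natCast, ZMod.natCast_val, ZMod.cast_id]
    have hfd' : f d' = (d : ZMod (ℓ ^ k)) := by
      rw [hd', map_natCast, ZMod.natCast_val, ZMod.cast_id]
    set N : Matrix (Fin 2) (Fin 2) (ZMod n) := (A : Matrix _ _ _) - c' • 1 with hN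
    set N' : Matrix (Fin 2) (Fin 2) (ZMod n) := (B : Matrix _ _ _) - d' • 1 with hN'
    have hNker : ∀ i j, f (N i j) = 0 := by
      intro i j
      have : N.map f = 0 := by
        rw [hN, Matrix.map_sub _ (fun a b => map_sub f a b), hc, map_smul_one, hfc', sub_self]
      have := congrFun (congrFun this i) j
      simpa [Matrix.map_apply] using this
    have hN'ker : ∀ i j, f (N' i j) = 0 := by
      intro i j
      have : N'.map f = 0 := by
        rw [hN', Matrix.map_sub _ (fun a b => map_sub f a b), hd, map_smul_one, hfd', sub_self]
      have := congrFun (congrFun this i) j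
      simpa [Matrix.map_apply] using this
    have hNN' : N * N' = 0 := by
      ext i j
      rw [Matrix.mul_apply]
      apply Finset.sum_eq_zero
      intro l _
      exact aux_ker_mul n (ℓ ^ k) hdvd hmm _ _ (hNker i l) (hN'ker l j)
    have hN'N : N' * N = 0 := by
      ext i j
      rw [Matrix.mul_apply]
      apply Finset.sum_eq_zero
      intro l _
      exact aux_ker_mul n (ℓ ^ k) hdvd hmm _ _ (hN'ker i l) (hNker l j)
    have hA : (A : Matrix (Fin 2) (Fin 2) (ZMod n)) = c' • 1 + N := by rw [hN]; abel
    have hB : (B : Matrix (Fin 2) (Fin 2) (ZMod n)) = d' • 1 + N' := by rw [hN']; abel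
    rw [hA, hB]
    simp only [add_mul, mul_add, smul_mul_assoc, mul_smul_comm, one_mul, mul_one,
      hNN', hN'N, smul_smul, smul_zero, add_zero]
    simp only [smul_add, smul_smul, mul_comm c' d']
    abel
  refine ⟨Γ, rfl, ?_, ?_⟩
  · intro A hA B hB
    ext1
    exact comm A hA B hB
  · intro A hA B hB v
    rw [Matrix.mulVec_mulVec, Matrix.mulVec_mulVec, comm A hA B hB]
end

section
/- Let p be a prime, let r ≥ 1, let G = (ℤ/pℤ)^r, and let G₁, …, G_N be the complete list of subgroups of G of index p (so N = (p^r − 1)/(p − 1)). Then in the group ring ℚ[G], the idempotents satisfy Σ_{i=1}^{N} ε_{G_i} = ((p^r − p)/(p − 1))·ε_G + e, where e ∈ G is the identity element. -/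
/-!
An index-`p` subgroup of an elementary abelian `p`-group `V` is the kernel of a nonzero linear
functional `V → 𝔽_p`, and of exactly `p - 1` of them (the nonzero multiples of one). Comparing
coefficients at `g`, the left-hand side counts the index-`p` subgroups containing `g`. Double
counting pairs (subgroup, functional) shows that `p - 1` times this number, plus one for the zero
functional, is the number of functionals vanishing at `g`: `|V|` for `g = 1` and `|V|/p` otherwise.
-/

/-- The idempotent `ε_H = (1/|H|) ∑_{σ ∈ H} σ` in the group ring `ℚ[G]`. -/
noncomputable def groupRingIdempotent {G : Type*} [Group G] [Finite G] (H : Subgroup G) :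
    MonoidAlgebra ℚ G :=
  haveI : Fintype H := Fintype.ofFinite H
  (Nat.card H : ℚ)⁻¹ • ∑ σ : H, MonoidAlgebra.of ℚ G (σ : G)

open Finset

instance {R M N : Type*} [Semiring R] [AddCommMonoid M] [AddCommMonoid N] [Module R M]
    [Module R N] [Finite M] [Finite N] : Finite (M →ₗ[R] N) :=
  Finite.of_injective _ DFunLike.coe_injective

theorem groupRingIdempotent_coeff {G : Type*} [Group G] [Finite G] (H : Subgroup G) (x : G)
    [Decidable (x ∈ H)] :
    (groupRingIdempotent H).coeff x = if x ∈ H then (Nat.card H : ℚ)⁻¹ else 0 := by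
  classical
  simp only [groupRingIdempotent, MonoidAlgebra.coeff_smul, MonoidAlgebra.coeff_sum,
    MonoidAlgebra.of_apply, MonoidAlgebra.coeff_single, Finsupp.smul_apply,
    Finsupp.finsetSum_apply, Finsupp.single_apply, sum_boole, smul_eq_mul]
  split_ifs with hx
  · rw [card_eq_one.2 ⟨⟨x, hx⟩, by ext; simp [Subtype.ext_iff]⟩]; simp
  · rw [card_eq_zero.2 (filter_eq_empty_iff.2 fun σ _ h => hx (by rw [← h]; exact σ.2))]; simp

namespace Module.Dual

open LinearMap

section Field

variable {K V : Type*} [Field K] [AddCommGroup V] [Module K V]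

theorem exists_smul_eq_of_ker_le {φ ψ : Dual K V} (h : ker φ ≤ ker ψ) : ∃ c : K, c • φ = ψ := by
  have := mem_span_of_iInf_ker_le_ker (L := fun _ : Unit => φ) (by simpa using h)
  simpa [Submodule.mem_span_singleton] using this

theorem card_ker_eq {φ : Dual K V} (hφ : φ ≠ 0) :
    Nat.card {ψ : Dual K V // ker ψ = ker φ} = Nat.card K - 1 := by
  rw [← Nat.card_units]
  refine (Nat.card_congr (Equiv.ofBijective (fun c : Kˣ => ⟨(c : K) • φ, ker_smul _ _ c.ne_zero⟩)
    ⟨fun c d hcd => Units.ext (smul_left_injective K hφ (congrArg Subtype.val hcd)), ?_⟩)).symm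
  rintro ⟨ψ, hψ⟩
  obtain ⟨c, rfl⟩ := exists_smul_eq_of_ker_le hψ.ge
  have hc : c ≠ 0 := by
    rintro rfl
    exact hφ (ker_eq_top.1 (by simpa using hψ.symm))
  exact ⟨Units.mk0 c hc, rfl⟩

theorem index_ker {φ : Dual K V} (hφ : φ ≠ 0) : (ker φ).toAddSubgroup.index = Nat.card K := by
  rw [show (ker φ).toAddSubgroup = φ.toAddMonoidHom.ker from rfl, AddSubgroup.index_ker,
    AddMonoidHom.range_eq_top.2 (range_eq_top.1 (range_eq_top_of_ne_zero hφ)),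
    AddSubgroup.card_top]

theorem exists_ker_eq_of_index_eq [Finite K] {W : Submodule K V}
    (hW : W.toAddSubgroup.index = Nat.card K) : ∃ φ : Dual K V, φ ≠ 0 ∧ ker φ = W := by
  have hK : 2 ≤ Nat.card K := Finite.one_lt_card
  have hcard : Nat.card (V ⧸ W) = Nat.card K := hW
  have : Finite (V ⧸ W) := Nat.finite_of_card_ne_zero (by omega)
  have : Fintype (V ⧸ W) := Fintype.ofFinite _
  have : Fintype K := Fintype.ofFinite _
  have hrank : finrank K (V ⧸ W) = finrank K K := by
    refine Nat.pow_right_injective hK ?_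
    simp only [Nat.card_eq_fintype_card] at hcard ⊢
    rw [← card_eq_pow_finrank, ← card_eq_pow_finrank, hcard]
  let e : (V ⧸ W) ≃ₗ[K] K := LinearEquiv.ofFinrankEq _ _ hrank
  refine ⟨e.toLinearMap ∘ₗ W.mkQ, fun h => ?_, by rw [LinearEquiv.ker_comp, Submodule.ker_mkQ]⟩
  have : W = ⊤ := by rw [← Submodule.ker_mkQ W, ← LinearEquiv.ker_comp e, h, ker_zero]
  rw [this, Submodule.top_toAddSubgroup, AddSubgroup.index_top] at hW
  omega

theorem card_eq [FiniteDimensional K V] : Nat.card (Dual K V) = Nat.card V :=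
  Nat.card_congr (LinearEquiv.ofFinrankEq _ _ Subspace.dual_finrank_eq).toEquiv

theorem card_apply_eq_zero_mul [Finite V] {v : V} (hv : v ≠ 0) :
    Nat.card {φ : Dual K V // φ v = 0} * Nat.card K = Nat.card V := by
  have hev : eval K V v ≠ 0 := fun h =>
    hv ((forall_dual_apply_eq_zero_iff K v).1 fun φ => by simpa using congrArg (· φ) h)
  calc _ = Nat.card (ker (eval K V v)) * (ker (eval K V v)).toAddSubgroup.index := by
        rw [index_ker hev]; rfl
    _ = Nat.card V := by
        rw [← card_eq (K := K) (V := V)]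
        exact (ker (eval K V v)).toAddSubgroup.card_mul_index

end Field

section ZMod

variable {p : ℕ} [Fact p.Prime] {V : Type*} [AddCommGroup V] [Module (ZMod p) V]

def kerSubgroup (φ : Dual (ZMod p) V) : Subgroup (Multiplicative V) :=
  AddSubgroup.toSubgroup (ker φ).toAddSubgroup

theorem mem_kerSubgroup {φ : Dual (ZMod p) V} {g : Multiplicative V} :
    g ∈ φ.kerSubgroup ↔ φ g.toAdd = 0 :=
  Iff.rfl

theorem index_kerSubgroup_eq_iff {φ : Dual (ZMod p) V} : φ.kerSubgroup.index = p ↔ φ ≠ 0 := by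
  rw [kerSubgroup, AddSubgroup.index_toSubgroup]
  refine ⟨?_, fun hφ => by rw [index_ker hφ, Nat.card_zmod]⟩
  rintro h rfl
  rw [ker_zero, Submodule.top_toAddSubgroup, AddSubgroup.index_top] at h
  exact (Fact.out : p.Prime).one_lt.ne h

theorem card_kerSubgroup_eq {H : Subgroup (Multiplicative V)} (hH : H.index = p) :
    Nat.card {φ : Dual (ZMod p) V // φ.kerSubgroup = H} = p - 1 := by
  set W := AddSubgroup.toZModSubmodule p (AddSubgroup.toSubgroup.symm H)
  have hWH : AddSubgroup.toSubgroup W.toAddSubgroup = H := by simp [W]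
  obtain ⟨φ₀, hφ₀, hker⟩ := exists_ker_eq_of_index_eq (K := ZMod p) (W := W) (by
    rw [← AddSubgroup.index_toSubgroup, hWH, hH, Nat.card_zmod])
  refine (Nat.card_congr (Equiv.subtypeEquivRight fun φ => ?_)).trans
    ((card_ker_eq hφ₀).trans (by rw [Nat.card_zmod]))
  rw [kerSubgroup, ← hWH, hker, AddSubgroup.toSubgroup.injective.eq_iff,
    Submodule.toAddSubgroup_inj]

open scoped Classical in
theorem card_filter_mem_mul_add_one [Finite V] (s : Finset (Subgroup (Multiplicative V)))
    (hs : ∀ H, H ∈ s ↔ H.index = p) (g : Multiplicative V) :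
    #{H ∈ s | g ∈ H} * (p - 1) + 1 = Nat.card {φ : Dual (ZMod p) V // φ g.toAdd = 0} := by
  have : Fintype (Dual (ZMod p) V) := Fintype.ofFinite _
  let T : Finset (Dual (ZMod p) V) := {φ | φ ≠ 0 ∧ φ g.toAdd = 0}
  have hmaps : ∀ φ ∈ T, φ.kerSubgroup ∈ {H ∈ s | g ∈ H} := by
    intro φ hφ
    simp only [T, mem_filter, mem_univ, true_and] at hφ ⊢
    exact ⟨(hs _).2 (index_kerSubgroup_eq_iff.2 hφ.1), hφ.2⟩
  have hfiber : ∀ H ∈ {H ∈ s | g ∈ H}, #{φ ∈ T | φ.kerSubgroup = H} = p - 1 := by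
    intro H hH
    rw [mem_filter] at hH
    rw [← card_kerSubgroup_eq ((hs H).1 hH.1), Nat.card_eq_fintype_card, Fintype.card_subtype,
      filter_filter]
    congr 1
    refine filter_congr fun φ _ => ⟨fun h => h.2, fun h => ⟨⟨?_, ?_⟩, h⟩⟩
    · exact index_kerSubgroup_eq_iff.1 (h ▸ (hs H).1 hH.1)
    · exact mem_kerSubgroup.1 (h ▸ hH.2)
  have hzero : #{φ : Dual (ZMod p) V | φ g.toAdd = 0} = #T + 1 := by
    rw [← card_erase_add_one (a := 0) (by simp)]
    congr 2
    ext
    simp [T]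
  rw [Nat.card_eq_fintype_card, Fintype.card_subtype, hzero, card_eq_sum_card_fiberwise hmaps,
    sum_const_nat hfiber]

open scoped Classical in
theorem cast_card_filter_mem_mul_add_one [Finite V] (s : Finset (Subgroup (Multiplicative V)))
    (hs : ∀ H, H ∈ s ↔ H.index = p) (g : Multiplicative V) :
    (#{H ∈ s | g ∈ H} : ℚ) * (p - 1) + 1 = if g = 1 then (Nat.card V : ℚ) else Nat.card V / p := by
  have hcount := congrArg (Nat.cast : ℕ → ℚ) (card_filter_mem_mul_add_one s hs g)
  push_cast [Nat.cast_sub (Fact.out : p.Prime).one_le] at hcount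
  rw [hcount]
  split_ifs with hg
  · simp [hg, card_eq]
  · have hp : (p : ℚ) ≠ 0 := by exact_mod_cast (Fact.out : p.Prime).ne_zero
    have hker := card_apply_eq_zero_mul (K := ZMod p) (v := g.toAdd) (by simpa using hg)
    rw [Nat.card_zmod] at hker
    rw [eq_div_iff hp]
    exact_mod_cast hker

end ZMod

end Module.Dual

theorem sum_groupRingIdempotent_of_index_eq_prime {p : ℕ} [Fact p.Prime] {V : Type*}
    [AddCommGroup V] [Module (ZMod p) V] [Finite V] (s : Finset (Subgroup (Multiplicative V)))
    (hs : ∀ H, H ∈ s ↔ H.index = p) :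
    ∑ H ∈ s, groupRingIdempotent H =
      (((Nat.card V : ℚ) - p) / ((p : ℚ) - 1)) •
          groupRingIdempotent (⊤ : Subgroup (Multiplicative V)) +
        MonoidAlgebra.of ℚ (Multiplicative V) 1 := by
  classical
  have hp : (p : ℚ) ≠ 0 := by exact_mod_cast (Fact.out : p.Prime).ne_zero
  have hp1 : (p : ℚ) - 1 ≠ 0 := sub_ne_zero.2 (by exact_mod_cast (Fact.out : p.Prime).one_lt.ne')
  have hV : (Nat.card V : ℚ) ≠ 0 := by exact_mod_cast Nat.card_pos.ne'
  have hcard : ∀ H ∈ s, (Nat.card H : ℚ)⁻¹ = p / Nat.card V := by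
    intro H hH
    have h : Nat.card H * p = Nat.card V := (hs H).1 hH ▸ H.card_mul_index
    rw [← h, Nat.cast_mul, div_mul_cancel_right₀ hp]
  refine MonoidAlgebra.ext (Finsupp.ext fun g => ?_)
  have hcount := Module.Dual.cast_card_filter_mem_mul_add_one s hs g
  simp only [MonoidAlgebra.coeff_add, MonoidAlgebra.coeff_smul, MonoidAlgebra.coeff_sum,
    Finsupp.add_apply, Finsupp.smul_apply, Finsupp.finsetSum_apply, groupRingIdempotent_coeff,
    Subgroup.card_top, MonoidAlgebra.of_apply, MonoidAlgebra.coeff_single, Finsupp.single_apply,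
    smul_eq_mul]
  rw [if_pos (Subgroup.mem_top g), show Nat.card (Multiplicative V) = Nat.card V from rfl,
    sum_congr rfl fun H hH => by rw [hcard H hH], ← sum_filter, sum_const, nsmul_eq_mul]
  by_cases hg : g = 1
  · rw [if_pos hg] at hcount
    rw [if_pos hg.symm]
    field_simp
    linear_combination (p : ℚ) * hcount
  · rw [if_neg hg] at hcount
    rw [if_neg (Ne.symm hg)]
    field_simp at hcount ⊢
    linear_combination hcount

theorem stmt5_general (p r : ℕ) [Fact p.Prime]
    (s : Finset (Subgroup (Multiplicative (Fin r → ZMod p))))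
    (hs : ∀ H : Subgroup (Multiplicative (Fin r → ZMod p)), H ∈ s ↔ H.index = p) :
    ∑ H ∈ s, groupRingIdempotent H =
      (((p : ℚ) ^ r - p) / ((p : ℚ) - 1)) •
          groupRingIdempotent (⊤ : Subgroup (Multiplicative (Fin r → ZMod p))) +
        MonoidAlgebra.of ℚ (Multiplicative (Fin r → ZMod p)) 1 := by
  have h := sum_groupRingIdempotent_of_index_eq_prime s hs
  rwa [show (Nat.card (Fin r → ZMod p) : ℚ) = p ^ r by simp] at h

/-- For `G = (ℤ/pℤ)^r` with index-`p` subgroups `G₁, …, G_N`, one has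
`∑ᵢ ε_{G_i} = ((p^r - p)/(p - 1)) ε_G + e` in `ℚ[G]`. -/
theorem stmt5 (p r : ℕ) [Fact p.Prime] (hr : 1 ≤ r)
    (s : Finset (Subgroup (Multiplicative (Fin r → ZMod p))))
    (hs : ∀ H : Subgroup (Multiplicative (Fin r → ZMod p)), H ∈ s ↔ H.index = p) :
    ∑ H ∈ s, groupRingIdempotent H =
      (((p : ℚ) ^ r - p) / ((p : ℚ) - 1)) •
          groupRingIdempotent (⊤ : Subgroup (Multiplicative (Fin r → ZMod p))) +
        MonoidAlgebra.of ℚ (Multiplicative (Fin r → ZMod p)) 1 :=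
  stmt5_general p r s hs
end

section
/- Let p be a prime, let r ≥ 1, let G = (ℤ/pℤ)^r, and let G₁, …, G_N be the subgroups of G of index p. Let M be a finite abelian group of order prime to p on which G acts by automorphisms. Then M^G ⊆ M^{G_i} for every i, and the homomorphism Φ : M → ⊕_{i=1}^{N} M^{G_i}/M^G sending m to the tuple whose i-th coordinate is the class of the norm N_{G_i}(m) = Σ_{σ∈G_i} σ·m modulo M^G, is surjective with kernel exactly M^G; in particular Φ induces an isomorphism M/M^G ≅ ⊕_{i=1}^{N} M^{G_i}/M^G. -/
/-!
Let `a = p^(r-1)`, the common order of the index-`p` subgroups `H`. Every `σ ≠ 1` lies outside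
exactly `a` of them (they correspond to the functionals `f` with `f σ = 1`), so double counting
gives `∑_H N_H = a + (N - a) N_G` in `ℤ[G]`. Hence if every `N_H m` is `G`-fixed, so is `a m`,
and so is `m` since `a` is invertible on `M`. For surjectivity: distinct `H`, `H'` generate `G`,
so `N_H` maps `M^{H'}` into `M^G`; for a family `w_H ∈ M^H` the element `m = a⁻¹ ∑_H w_H`
therefore satisfies `N_H m ≡ a⁻¹ N_H w_H = w_H` modulo `M^G`.
-/

/-- The norm map `m ↦ ∑_{σ ∈ H} σ·m` attached to a subgroup `H` of a finite group `G`
acting on an additive monoid `M`. -/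
noncomputable def subgroupNorm {G : Type*} [Group G] [Finite G] (H : Subgroup G)
    {M : Type*} [AddCommMonoid M] [DistribMulAction G M] (m : M) : M :=
  haveI : Fintype H := Fintype.ofFinite H
  ∑ σ : H, (σ : G) • m

open Finset Module

namespace Subgroup

variable {G : Type*} [Group G]

lemma eq_of_le_of_index_eq {H K : Subgroup G} (hle : H ≤ K) (hidx : H.index = K.index)
    (h0 : H.index ≠ 0) : H = K := by
  have : H.FiniteIndex := ⟨h0⟩
  by_contra hne
  exact (index_strictAnti (lt_of_le_of_ne hle hne)).ne' hidx

lemma sup_eq_top_of_index_eq_prime {p : ℕ} (hp : p.Prime) {H K : Subgroup G} (hHK : H ≠ K)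
    (hH : H.index = p) (hK : K.index = p) : H ⊔ K = ⊤ := by
  have hdvd : (H ⊔ K).index ∣ p := hH ▸ index_dvd_of_le le_sup_left
  rcases hp.eq_one_or_self_of_dvd _ hdvd with h | h
  · exact index_eq_one.mp h
  · exact absurd ((eq_of_le_of_index_eq le_sup_left (hH.trans h.symm) (hH ▸ hp.ne_zero)).trans
      (eq_of_le_of_index_eq le_sup_right (hK.trans h.symm) (hK ▸ hp.ne_zero)).symm) hHK

end Subgroup

lemma LinearMap.eq_of_ker_le_of_apply_eq_one {R M : Type*} [CommRing R] [AddCommGroup M]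
    [Module R M] {f g : Dual R M} {v : M} (hf : f v = 1) (hg : g v = 1) (hle : ker f ≤ ker g) :
    f = g := by
  ext x
  have hx : x - f x • v ∈ ker g := hle (by simp [hf])
  exact (by simpa [hg, sub_eq_zero] using hx : g x = f x).symm

lemma FixedPoints.mem_addSubgroup_of_nsmul_mem {G M : Type*} [Monoid G] [AddCommGroup M]
    [Finite M] [DistribMulAction G M] {n : ℕ} (hn : (Nat.card M).Coprime n) {m : M}
    (h : n • m ∈ FixedPoints.addSubgroup G M) : m ∈ FixedPoints.addSubgroup G M := fun σ =>
  hn.nsmul_right_bijective.injective (by simpa [smul_comm σ n m] using h σ)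

section Norm

variable {G : Type*} [CommGroup G] [Finite G] {M : Type*} [AddCommGroup M] [DistribMulAction G M]

noncomputable def subgroupNormHom (H : Subgroup G) : M →+ M :=
  haveI : Fintype H := Fintype.ofFinite H
  ∑ σ : H, DistribSMul.toAddMonoidHom M (σ : G)

@[simp]
lemma subgroupNormHom_apply (H : Subgroup G) (m : M) :
    subgroupNormHom H m = subgroupNorm H m := by
  simp [subgroupNormHom, subgroupNorm, AddMonoidHom.finsetSum_apply]

lemma smul_subgroupNorm (H : Subgroup G) (σ : G) (m : M) :
    σ • subgroupNorm H m = subgroupNorm H (σ • m) := by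
  simp only [subgroupNorm, smul_sum, smul_smul, mul_comm σ]

lemma smul_subgroupNorm_of_mem {H : Subgroup G} {σ : G} (hσ : σ ∈ H) (m : M) :
    σ • subgroupNorm H m = subgroupNorm H m := by
  let : Fintype H := Fintype.ofFinite H
  simp only [subgroupNorm, smul_sum, smul_smul]
  exact Fintype.sum_equiv (Equiv.mulLeft (⟨σ, hσ⟩ : H)) _ _ fun τ => rfl

lemma subgroupNorm_of_forall_smul_eq {H : Subgroup G} {m : M} (hm : ∀ σ ∈ H, σ • m = m) :
    subgroupNorm H m = Nat.card H • m := by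
  simp [subgroupNorm, hm, Fintype.card_eq_nat_card]

lemma subgroupNorm_mem_fixedPoints_of_sup_eq_top {H K : Subgroup G} (hHK : H ⊔ K = ⊤) {m : M}
    (hm : ∀ σ ∈ K, σ • m = m) : subgroupNorm H m ∈ FixedPoints.addSubgroup G M := by
  suffices ⊤ ≤ MulAction.stabilizer G (subgroupNorm H m) from fun σ => this (Subgroup.mem_top σ)
  rw [← hHK, sup_le_iff]
  exact ⟨fun σ hσ => smul_subgroupNorm_of_mem hσ m, fun σ hσ => by
    rw [MulAction.mem_stabilizer_iff, smul_subgroupNorm, hm σ hσ]⟩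

lemma subgroupNorm_eq_sum_filter [Fintype G] (H : Subgroup G) [DecidablePred (· ∈ H)] (m : M) :
    subgroupNorm H m = ∑ σ with σ ∈ H, σ • m :=
  (sum_subtype _ (by simp) (fun σ : G => σ • m)).symm

lemma subgroupNorm_top [Fintype G] (m : M) :
    subgroupNorm (⊤ : Subgroup G) m = ∑ σ : G, σ • m := by
  classical
  simp [subgroupNorm_eq_sum_filter]

lemma sum_subgroupNorm_add_nsmul {ι : Type*} [Fintype ι] [Fintype G] (H : ι → Subgroup G)
    {a : ℕ} (ha : ∀ σ ≠ 1, Nat.card {i // σ ∉ H i} = a) (m : M) :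
    ∑ i, subgroupNorm (H i) m + a • subgroupNorm (⊤ : Subgroup G) m =
      a • m + Fintype.card ι • subgroupNorm (⊤ : Subgroup G) m := by
  classical
  have hsplit (i : ι) :
      subgroupNorm (H i) m + ∑ σ with σ ∉ H i, σ • m = subgroupNorm (⊤ : Subgroup G) m := by
    rw [subgroupNorm_eq_sum_filter, subgroupNorm_top, sum_filter_add_sum_filter_not]
  have hcount :
      ∑ i, ∑ σ with σ ∉ H i, σ • m = a • (subgroupNorm (⊤ : Subgroup G) m - m) := by
    have hc (σ : G) : #{i | σ ∉ H i} = Nat.card {i // σ ∉ H i} := by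
      rw [Nat.card_eq_fintype_card, Fintype.card_subtype]
    -- after swapping the sums, `σ ≠ 1` is counted `a` times and `σ = 1` never
    simp_rw [sum_filter]
    rw [sum_comm]
    simp_rw [← sum_filter, sum_const, hc]
    rw [← sum_erase_add _ _ (mem_univ 1),
      sum_congr rfl fun σ hσ => by rw [ha σ (ne_of_mem_erase hσ)],
      ← smul_sum, sum_erase_eq_sub (mem_univ 1), subgroupNorm_top]
    simp
  calc _ = ∑ i, (subgroupNorm (H i) m + ∑ σ with σ ∉ H i, σ • m) -
          a • (subgroupNorm (⊤ : Subgroup G) m - m) + a • subgroupNorm (⊤ : Subgroup G) m := by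
        rw [sum_add_distrib, hcount, add_sub_cancel_right]
    _ = _ := by simp only [hsplit, sum_const, card_univ, smul_sub]; abel

variable [Finite M]

theorem exists_subgroupNorm_sub_mem_fixedPoints {p : ℕ} (hp : p.Prime)
    (hM : (Nat.card M).Coprime (Nat.card G)) (w : Subgroup G → M)
    (hw : ∀ H : Subgroup G, H.index = p → ∀ σ ∈ H, σ • w H = w H) :
    ∃ m : M, ∀ H : Subgroup G, H.index = p →
      subgroupNorm H m - w H ∈ FixedPoints.addSubgroup G M := by
  classical
  by_cases hex : ∃ H : Subgroup G, H.index = p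
  swap
  · exact ⟨0, fun H hH => absurd ⟨H, hH⟩ hex⟩
  obtain ⟨H₀, hH₀⟩ := hex
  have hcard (H : Subgroup G) (hH : H.index = p) : Nat.card H = Nat.card H₀ := by
    rw [← Nat.mul_left_inj hp.ne_zero]
    nth_rw 1 [← hH, ← hH₀]
    rw [Subgroup.card_mul_index, Subgroup.card_mul_index]
  have hn : (Nat.card M).Coprime (Nat.card H₀) :=
    hM.coprime_dvd_right (Subgroup.card_subgroup_dvd_card H₀)
  let : Fintype {H : Subgroup G // H.index = p} := Fintype.ofFinite _
  obtain ⟨m, hm⟩ : ∃ m : M, Nat.card H₀ • m = ∑ H : {H : Subgroup G // H.index = p}, w H :=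
    hn.nsmul_right_bijective.surjective _
  refine ⟨m, fun H hH => FixedPoints.mem_addSubgroup_of_nsmul_mem hn ?_⟩
  have hsum : Nat.card H₀ • (subgroupNorm H m - w H) =
      ∑ K ∈ (univ : Finset {H : Subgroup G // H.index = p}).erase ⟨H, hH⟩,
        subgroupNorm H (w K) := by
    rw [nsmul_sub, ← subgroupNormHom_apply, ← map_nsmul, hm, map_sum,
      sum_erase_eq_sub (mem_univ _)]
    simp [subgroupNorm_of_forall_smul_eq (hw H hH), hcard H hH]
  rw [hsum]
  refine AddSubgroup.sum_mem _ fun K hK => subgroupNorm_mem_fixedPoints_of_sup_eq_top ?_ (hw K K.2)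
  exact Subgroup.sup_eq_top_of_index_eq_prime hp (fun h => ne_of_mem_erase hK (Subtype.ext h.symm))
    hH K.2

end Norm

section ElementaryAbelian

variable {p : ℕ} [hp : Fact p.Prime] {V : Type*} [AddCommGroup V] [Module (ZMod p) V]

lemma index_toSubgroup_ker {f : Dual (ZMod p) V} {v : V} (hf : f v = 1) :
    (LinearMap.ker f).toAddSubgroup.toSubgroup.index = p := by
  have hsurj : Function.Surjective f := fun c => ⟨c • v, by simp [hf]⟩
  rw [AddSubgroup.index_toSubgroup, LinearMap.ker_toAddSubgroup, AddSubgroup.index_ker,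
    AddMonoidHom.range_eq_top.mpr hsurj, AddSubgroup.card_top, Nat.card_zmod]

def kerSubgroupOfApplyEqOne (σ : Multiplicative V)
    (f : {f : Dual (ZMod p) V // f (Multiplicative.toAdd σ) = 1}) :
    {H : Subgroup (Multiplicative V) // H.index = p ∧ σ ∉ H} :=
  ⟨(LinearMap.ker f.1).toAddSubgroup.toSubgroup, index_toSubgroup_ker f.2, by simp [f.2]⟩

lemma bijective_kerSubgroupOfApplyEqOne (σ : Multiplicative V) :
    Function.Bijective (kerSubgroupOfApplyEqOne (p := p) σ) := by
  refine ⟨fun f g hfg => Subtype.ext <| LinearMap.eq_of_ker_le_of_apply_eq_one f.2 g.2 ?_, ?_⟩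
  · exact fun x hx => (hfg ▸ hx : Multiplicative.ofAdd x ∈ (kerSubgroupOfApplyEqOne σ g).1)
  · rintro ⟨H, hH, hσ⟩
    let K := AddSubgroup.toZModSubmodule p H.toAddSubgroup'
    have hσK : K.mkQ (Multiplicative.toAdd σ) ≠ 0 := by
      simpa [K, Submodule.Quotient.mk_eq_zero] using hσ
    obtain ⟨g, hg⟩ := Projective.exists_dual_eq_one (ZMod p) hσK
    refine ⟨⟨g ∘ₗ K.mkQ, hg⟩, Subtype.ext (Subgroup.eq_of_le_of_index_eq ?_ ?_ ?_).symm⟩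
    · intro x hx
      simp [kerSubgroupOfApplyEqOne, K,
        (Submodule.Quotient.mk_eq_zero K (x := Multiplicative.toAdd x)).mpr hx]
    · rw [hH, (kerSubgroupOfApplyEqOne σ ⟨g ∘ₗ K.mkQ, hg⟩).2.1]
    · exact hH ▸ hp.out.ne_zero

variable [Finite V]

lemma card_dual_apply_eq_one_mul {v : V} (hv : v ≠ 0) :
    Nat.card {f : Dual (ZMod p) V // f v = 1} * p = Nat.card V := by
  obtain ⟨f₁, hf₁⟩ := Projective.exists_dual_eq_one (ZMod p) hv
  let ev := (Dual.eval (ZMod p) V v).toAddMonoidHom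
  have hsurj : Function.Surjective ev := fun c => ⟨c • f₁, by simp [ev, hf₁]⟩
  have hfiber : Nat.card {f : Dual (ZMod p) V // f v = 1} = Nat.card ev.ker :=
    Nat.card_congr (ev.fiberEquivKerOfSurjective hsurj 1)
  have hdual : Nat.card (Dual (ZMod p) V) = Nat.card V :=
    Nat.card_congr (Module.finBasis (ZMod p) V).toDualEquiv.toEquiv.symm
  rw [hfiber, ← hdual, ← ev.ker.index_mul_card, AddSubgroup.index_ker,
    AddMonoidHom.range_eq_top.mpr hsurj, AddSubgroup.card_top, Nat.card_zmod, mul_comm]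

lemma card_index_eq_prime_notMem_mul {σ : Multiplicative V} (hσ : σ ≠ 1) :
    Nat.card {H : Subgroup (Multiplicative V) // H.index = p ∧ σ ∉ H} * p = Nat.card V := by
  rw [← Nat.card_eq_of_bijective _ (bijective_kerSubgroupOfApplyEqOne σ)]
  exact card_dual_apply_eq_one_mul hσ

variable {M : Type*} [AddCommGroup M] [Finite M] [DistribMulAction (Multiplicative V) M]

theorem forall_subgroupNorm_mem_fixedPoints_iff (hM : (Nat.card M).Coprime (Nat.card V))
    (m : M) :
    (∀ H : Subgroup (Multiplicative V), H.index = p →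
        subgroupNorm H m ∈ FixedPoints.addSubgroup (Multiplicative V) M) ↔
      m ∈ FixedPoints.addSubgroup (Multiplicative V) M := by
  refine ⟨fun h σ => ?_, fun hm H _ =>
    subgroupNorm_mem_fixedPoints_of_sup_eq_top (sup_top_eq H) fun σ _ => hm σ⟩
  rcases eq_or_ne σ 1 with rfl | hσ
  · exact one_smul _ m
  let : Fintype (Multiplicative V) := Fintype.ofFinite _
  let : Fintype {H : Subgroup (Multiplicative V) // H.index = p} := Fintype.ofFinite _
  set a := Nat.card {H : Subgroup (Multiplicative V) // H.index = p ∧ σ ∉ H}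
  have ha (τ : Multiplicative V) (hτ : τ ≠ 1) :
      Nat.card {H : {H : Subgroup (Multiplicative V) // H.index = p} // τ ∉ H.1} = a := by
    rw [Nat.card_congr (Equiv.subtypeSubtypeEquivSubtypeInter _ (τ ∉ ·)),
      ← Nat.mul_left_inj hp.out.ne_zero, card_index_eq_prime_notMem_mul hτ,
      card_index_eq_prime_notMem_mul hσ]
  have hcop : (Nat.card M).Coprime a :=
    hM.coprime_dvd_right ⟨p, (card_index_eq_prime_notMem_mul hσ).symm⟩
  have htop : subgroupNorm (⊤ : Subgroup (Multiplicative V)) m ∈ FixedPoints.addSubgroup _ M :=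
    fun τ => smul_subgroupNorm_of_mem (Subgroup.mem_top τ) m
  refine FixedPoints.mem_addSubgroup_of_nsmul_mem hcop ?_ σ
  rw [eq_sub_of_add_eq (sum_subgroupNorm_add_nsmul Subtype.val ha m).symm]
  exact sub_mem (add_mem (AddSubgroup.sum_mem _ fun H _ => h H.1 H.2)
    (AddSubgroup.nsmul_mem _ htop _)) (AddSubgroup.nsmul_mem _ htop _)

end ElementaryAbelian

theorem stmt10_general (p r : ℕ) [Fact p.Prime]
    (M : Type*) [AddCommGroup M] [Finite M]
    [DistribMulAction (Multiplicative (Fin r → ZMod p)) M]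
    (hM : Nat.Coprime p (Nat.card M)) :
    (∀ H : Subgroup (Multiplicative (Fin r → ZMod p)), H.index = p →
      {m : M | ∀ σ : Multiplicative (Fin r → ZMod p), σ • m = m} ⊆
        {m : M | ∀ σ ∈ H, σ • m = m}) ∧
    (∀ m : M,
      (∀ H : Subgroup (Multiplicative (Fin r → ZMod p)), H.index = p →
          subgroupNorm H m ∈
            {m' : M | ∀ σ : Multiplicative (Fin r → ZMod p), σ • m' = m'}) ↔
        ∀ σ : Multiplicative (Fin r → ZMod p), σ • m = m) ∧
    (∀ w : Subgroup (Multiplicative (Fin r → ZMod p)) → M,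
      (∀ H, H.index = p → w H ∈ {m : M | ∀ σ ∈ H, σ • m = m}) →
      ∃ m : M, ∀ H, H.index = p →
        subgroupNorm H m - w H ∈
          {m' : M | ∀ σ : Multiplicative (Fin r → ZMod p), σ • m' = m'}) := by
  have hcard : (Nat.card M).Coprime (Nat.card (Fin r → ZMod p)) := by
    simpa [Nat.card_pi] using (hM.pow_left r).symm
  exact ⟨fun _ _ _ hm σ _ => hm σ, forall_subgroupNorm_mem_fixedPoints_iff hcard,
    exists_subgroupNorm_sub_mem_fixedPoints Fact.out hcard⟩

/-- For `G = (ℤ/pℤ)^r` acting on a finite abelian group `M` of order prime to `p`, with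
`G₁, …, G_N` the index-`p` subgroups: `M^G ⊆ M^{G_i}` for each `i`, and the map
`Φ : M → ⊕ᵢ M^{G_i}/M^G`, whose `i`-th coordinate is the norm `N_{G_i}(m)` modulo `M^G`,
is surjective with kernel exactly `M^G`, hence induces `M/M^G ≅ ⊕ᵢ M^{G_i}/M^G`. -/
theorem stmt10 (p r : ℕ) [Fact p.Prime] (hr : 1 ≤ r)
    (M : Type*) [AddCommGroup M] [Finite M]
    [DistribMulAction (Multiplicative (Fin r → ZMod p)) M]
    (hM : Nat.Coprime p (Nat.card M)) :
    (∀ H : Subgroup (Multiplicative (Fin r → ZMod p)), H.index = p →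
      {m : M | ∀ σ : Multiplicative (Fin r → ZMod p), σ • m = m} ⊆
        {m : M | ∀ σ ∈ H, σ • m = m}) ∧
    (∀ m : M,
      (∀ H : Subgroup (Multiplicative (Fin r → ZMod p)), H.index = p →
          subgroupNorm H m ∈
            {m' : M | ∀ σ : Multiplicative (Fin r → ZMod p), σ • m' = m'}) ↔
        ∀ σ : Multiplicative (Fin r → ZMod p), σ • m = m) ∧
    (∀ w : Subgroup (Multiplicative (Fin r → ZMod p)) → M,
      (∀ H, H.index = p → w H ∈ {m : M | ∀ σ ∈ H, σ • m = m}) →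
      ∃ m : M, ∀ H, H.index = p →
        subgroupNorm H m - w H ∈
          {m' : M | ∀ σ : Multiplicative (Fin r → ZMod p), σ • m' = m'}) :=
  stmt10_general p r M hM
end
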